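/- arXiv:1707.08394 — 4 statements merged into one kernel-verified Lean document; each statement's English description precedes it below -/
import Mathlib

section
/- For a strictly double positive moment sequence, set l_n := |P_n(0)|² and ω_n := −1/(b_n P_n(0) P_{n+1}(0)). Then the Jacobi coefficients admit the representation a_n = (1/l_n)(1/ω_{n−1} + 1/ω_n) and b_n = 1/(ω_n √(l_n l_{n+1})) for all n ≥ 0, with the convention 1/ω_{−1} := 0; moreover l_n > 0 and ω_n > 0. -/
open MeasureTheory

noncomputable section

/-- The Hankel determinant `Δ_{0,n} = det (s_{i+j})_{0 ≤ i,j ≤ n}`. -/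
def hankel (s : ℕ → ℝ) (n : ℕ) : ℝ :=
  (Matrix.of fun i j : Fin (n + 1) => s (i.1 + j.1)).det

/-- `Δ_{0,n-1}` with the convention `Δ_{0,-1} = 1`. -/
def hankelPrev (s : ℕ → ℝ) : ℕ → ℝ
  | 0 => 1
  | n + 1 => hankel s n

/-- The shifted Hankel determinant `Δ_{1,n} = det (s_{1+i+j})_{0 ≤ i,j ≤ n−1}`
(with `Δ_{1,0} = 1`). -/
def hankel1 (s : ℕ → ℝ) (n : ℕ) : ℝ :=
  (Matrix.of fun i j : Fin n => s (1 + i.1 + j.1)).det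

/-- `ρ` is a solution of the Hamburger moment problem with data `s`. -/
def IsMomentSolution (s : ℕ → ℝ) (ρ : Measure ℝ) : Prop :=
  ∀ k : ℕ, Integrable (fun x : ℝ => x ^ k) ρ ∧ (∫ x, x ^ k ∂ρ) = s k

/-- The orthonormal polynomial of the first kind `P_n`, via the determinant formula. -/
def Pn (s : ℕ → ℝ) (n : ℕ) (z : ℝ) : ℝ :=
  (Real.sqrt (hankelPrev s n * hankel s n))⁻¹ *
    (Matrix.of fun i j : Fin (n + 1) =>
      if i.1 < n then s (i.1 + j.1) else z ^ j.1).det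

/-- The diagonal Jacobi coefficient `a_n = ∫ λ P_n(λ)² dρ(λ)`. -/
def aJ (s : ℕ → ℝ) (ρ : Measure ℝ) (n : ℕ) : ℝ :=
  ∫ x, x * (Pn s n x) ^ 2 ∂ρ

/-- The off-diagonal Jacobi coefficient `b_n = ∫ λ P_n(λ) P_{n+1}(λ) dρ(λ)`. -/
def bJ (s : ℕ → ℝ) (ρ : Measure ℝ) (n : ℕ) : ℝ :=
  ∫ x, x * Pn s n x * Pn s (n + 1) x ∂ρ

/-- The Krein–Stieltjes string length `l_n = |P_n(0)|²`. -/
def lKS (s : ℕ → ℝ) (n : ℕ) : ℝ := (Pn s n 0) ^ 2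

/-- The Krein–Stieltjes string mass `ω_n = −1/(b_n P_n(0) P_{n+1}(0))`. -/
def omKS (s : ℕ → ℝ) (ρ : Measure ℝ) (n : ℕ) : ℝ :=
  -1 / (bJ s ρ n * Pn s n 0 * Pn s (n + 1) 0)

/-!
By the determinant formula, `P_n = γ_n D_n` where `D_n` is the Hankel determinant `Δ_{0,n}` with its
last row replaced by `(1, X, …, Xⁿ)`. Expanding along that row shows that the moment functional maps
`Xᵏ D_n` to a determinant with two equal rows when `k < n` and to `Δ_{0,n}` when `k = n`. Hence the
`P_n` are orthonormal, and since the Hankel matrices are invertible a polynomial of degree `≤ N`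
orthogonal to `P_0, …, P_N` vanishes; expanding `X P_n` in the basis `P_k` gives the three-term
recurrence. Evaluated at `0` and multiplied by `P_n(0)`, the recurrence is the formula for `a_n`.
Finally `P_n(0) = γ_n (-1)ⁿ Δ_{1,n}` alternates in sign while `b_n = γ_n γ_{n+1} Δ_{0,n-1} Δ_{0,n+1} > 0`,
so `ω_n > 0` and `√(l_n l_{n+1}) = -P_n(0) P_{n+1}(0)`, which is the formula for `b_n`.
-/

open Polynomial

theorem Matrix.det_updateRow_eq_sum {n R : Type*} [Fintype n] [DecidableEq n] [CommRing R]
    (A : Matrix n n R) (i : n) (v : n → R) :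
    (A.updateRow i v).det = ∑ j, v j * (A.updateRow i (Pi.single j 1)).det := by
  rw [Matrix.det_eq_sum_mul_adjugate_row _ i]
  simp_rw [Matrix.adjugate_apply, Matrix.updateRow_self, Matrix.updateRow_idem]

theorem LinearMap.map_det_updateRow_map_algebraMap {n R S : Type*} [Fintype n] [DecidableEq n]
    [CommRing R] [CommRing S] [Algebra R S] (φ : S →ₗ[R] R) (A : Matrix n n R) (i : n)
    (v : n → S) :
    φ ((A.map (algebraMap R S)).updateRow i v).det = (A.updateRow i (φ ∘ v)).det := by
  rw [Matrix.det_updateRow_eq_sum, Matrix.det_updateRow_eq_sum, map_sum]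
  refine Finset.sum_congr rfl fun j _ => ?_
  have hsingle : Pi.single j (1 : S) = algebraMap R S ∘ Pi.single j 1 := by
    ext l
    by_cases hl : l = j <;> simp [hl]
  rw [hsingle, ← Matrix.map_updateRow, ← RingHom.mapMatrix_apply, ← RingHom.map_det, mul_comm,
    ← Algebra.smul_def, map_smul, smul_eq_mul, mul_comm]
  rfl

theorem LinearMap.map_mul_eq_sum_range_coeff {R M : Type*} [CommSemiring R] [AddCommMonoid M]
    [Module R M] (φ : R[X] →ₗ[R] M) {q : R[X]} {N : ℕ} (hq : q.natDegree ≤ N) (r : R[X]) :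
    φ (q * r) = ∑ i ∈ Finset.range (N + 1), q.coeff i • φ (X ^ i * r) := by
  conv_lhs => rw [q.as_sum_range' (N + 1) (Nat.lt_succ_of_le hq)]
  simp [Finset.sum_mul, ← C_mul_X_pow_eq_monomial, ← smul_eq_C_mul]

def momentFunctional (s : ℕ → ℝ) : ℝ[X] →ₗ[ℝ] ℝ :=
  Polynomial.lsum fun k => s k • LinearMap.id

@[simp]
theorem momentFunctional_monomial (s : ℕ → ℝ) (k : ℕ) (a : ℝ) :
    momentFunctional s (monomial k a) = s k * a := by
  simp [momentFunctional]

@[simp]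
theorem momentFunctional_X_pow (s : ℕ → ℝ) (k : ℕ) : momentFunctional s (X ^ k) = s k := by
  simp [← monomial_one_right_eq_X_pow]

@[simp]
theorem momentFunctional_C_mul (s : ℕ → ℝ) (a : ℝ) (p : ℝ[X]) :
    momentFunctional s (C a * p) = a * momentFunctional s p := by
  rw [← smul_eq_C_mul, map_smul, smul_eq_mul]

theorem IsMomentSolution.integral_eval {s : ℕ → ℝ} {ρ : Measure ℝ}
    (hρ : IsMomentSolution s ρ) (p : ℝ[X]) :
    ∫ x, p.eval x ∂ρ = momentFunctional s p := by
  suffices Integrable (fun x => p.eval x) ρ ∧ ∫ x, p.eval x ∂ρ = momentFunctional s p from this.2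
  induction p using Polynomial.induction_on' with
  | add p q hp hq =>
    simp only [eval_add, map_add]
    exact ⟨hp.1.add hq.1, by rw [integral_add hp.1 hq.1, hp.2, hq.2]⟩
  | monomial k a =>
    simp only [eval_monomial, momentFunctional_monomial]
    exact ⟨(hρ k).1.const_mul a, by rw [integral_const_mul, (hρ k).2, mul_comm]⟩

def hankelMatrix (s : ℕ → ℝ) (n : ℕ) : Matrix (Fin (n + 1)) (Fin (n + 1)) ℝ :=
  Matrix.of fun i j => s (i + j)

theorem det_hankelMatrix_updateRow_shift_of_lt (s : ℕ → ℝ) {n k : ℕ} (hk : k < n) :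
    ((hankelMatrix s n).updateRow (Fin.last n) fun j => s (k + j)).det = 0 := by
  refine Matrix.det_zero_of_row_eq (i := ⟨k, by omega⟩) (j := Fin.last n)
    (Fin.ne_of_val_ne (by simp; omega)) ?_
  ext j
  simp [Matrix.updateRow_apply, Fin.ext_iff, hk.ne, hankelMatrix]

theorem det_hankelMatrix_updateRow_shift_self (s : ℕ → ℝ) (n : ℕ) :
    ((hankelMatrix s n).updateRow (Fin.last n) fun j => s (n + j)).det = hankel s n :=
  congrArg Matrix.det (Matrix.updateRow_eq_self _ _)

theorem det_hankelMatrix_updateRow_single_last (s : ℕ → ℝ) (n : ℕ) :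
    ((hankelMatrix s n).updateRow (Fin.last n) (Pi.single (Fin.last n) 1)).det
      = hankelPrev s n := by
  rw [Matrix.det_succ_row _ (Fin.last n), Fintype.sum_eq_single (Fin.last n)]
  · cases n with
    | zero => simp [hankelPrev]
    | succ m =>
      simp [Matrix.submatrix, Matrix.updateRow_apply, (Fin.castSucc_lt_last _).ne, hankelMatrix,
        hankelPrev, hankel]
  · intro j hj
    simp [hj]

theorem det_hankelMatrix_updateRow_single_zero (s : ℕ → ℝ) (n : ℕ) :
    ((hankelMatrix s n).updateRow (Fin.last n) (Pi.single 0 1)).det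
      = (-1) ^ n * hankel1 s n := by
  rw [Matrix.det_succ_row _ (Fin.last n), Fintype.sum_eq_single 0]
  · simp [Matrix.submatrix, Matrix.updateRow_apply, (Fin.castSucc_lt_last _).ne, hankelMatrix,
      hankel1, add_comm, add_left_comm]
  · intro j hj
    simp [hj]

theorem eq_zero_of_momentFunctional_X_pow_mul_eq_zero {s : ℕ → ℝ} {N : ℕ} (hN : hankel s N ≠ 0)
    {r : ℝ[X]} (hr : r.natDegree ≤ N) (h : ∀ k ≤ N, momentFunctional s (X ^ k * r) = 0) :
    r = 0 := by
  have hv : (hankelMatrix s N).mulVec (fun j => r.coeff j) = 0 := by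
    ext k
    rw [Pi.zero_apply, ← h k (Nat.lt_succ_iff.mp k.isLt), mul_comm,
      (momentFunctional s).map_mul_eq_sum_range_coeff hr, ← Fin.sum_univ_eq_sum_range]
    simp [Matrix.mulVec, dotProduct, hankelMatrix, ← pow_add, mul_comm, smul_eq_mul]
  have hcoeff := Matrix.eq_zero_of_mulVec_eq_zero hN hv
  ext m
  by_cases hm : m ≤ N
  · simpa using congrFun hcoeff ⟨m, by omega⟩
  · exact coeff_eq_zero_of_natDegree_lt (by omega)

def detPoly (s : ℕ → ℝ) (n : ℕ) : ℝ[X] :=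
  (((hankelMatrix s n).map C).updateRow (Fin.last n) fun j => X ^ (j : ℕ)).det

theorem map_detPoly (φ : ℝ[X] →ₗ[ℝ] ℝ) (s : ℕ → ℝ) (n : ℕ) :
    φ (detPoly s n) = ((hankelMatrix s n).updateRow (Fin.last n) fun j => φ (X ^ (j : ℕ))).det :=
  φ.map_det_updateRow_map_algebraMap _ _ _

theorem coeff_detPoly (s : ℕ → ℝ) (n m : ℕ) :
    (detPoly s n).coeff m
      = ((hankelMatrix s n).updateRow (Fin.last n) fun j => if m = j then 1 else 0).det := by
  simpa [coeff_X_pow] using map_detPoly (lcoeff ℝ m) s n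

theorem natDegree_detPoly_le (s : ℕ → ℝ) (n : ℕ) : (detPoly s n).natDegree ≤ n := by
  refine natDegree_le_iff_coeff_eq_zero.mpr fun m hm => ?_
  rw [coeff_detPoly]
  refine Matrix.det_eq_zero_of_row_eq_zero (Fin.last n) fun j => ?_
  have : m ≠ j := by have := j.isLt; omega
  simp [this]

theorem coeff_detPoly_self (s : ℕ → ℝ) (n : ℕ) : (detPoly s n).coeff n = hankelPrev s n := by
  rw [coeff_detPoly, ← det_hankelMatrix_updateRow_single_last]
  congr 2
  ext j
  simp [Pi.single_apply, Fin.ext_iff, eq_comm]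

theorem eval_zero_detPoly (s : ℕ → ℝ) (n : ℕ) : (detPoly s n).eval 0 = (-1) ^ n * hankel1 s n := by
  rw [← coeff_zero_eq_eval_zero, coeff_detPoly, ← det_hankelMatrix_updateRow_single_zero]
  congr 2
  ext j
  simp only [Pi.single_apply, Fin.ext_iff, Fin.val_zero]
  exact if_congr eq_comm rfl rfl

theorem momentFunctional_X_pow_mul_detPoly (s : ℕ → ℝ) (n k : ℕ) :
    momentFunctional s (X ^ k * detPoly s n)
      = ((hankelMatrix s n).updateRow (Fin.last n) fun j => s (k + j)).det := by
  have h := map_detPoly ((momentFunctional s).comp (LinearMap.mulLeft ℝ (X ^ k))) s n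
  simp only [LinearMap.comp_apply, LinearMap.mulLeft_apply, ← pow_add, momentFunctional_X_pow] at h
  exact h

theorem momentFunctional_mul_detPoly (s : ℕ → ℝ) {n : ℕ} {q : ℝ[X]} (hq : q.natDegree ≤ n) :
    momentFunctional s (q * detPoly s n) = q.coeff n * hankel s n := by
  rw [(momentFunctional s).map_mul_eq_sum_range_coeff hq, Finset.sum_eq_single n]
  · rw [momentFunctional_X_pow_mul_detPoly, det_hankelMatrix_updateRow_shift_self, smul_eq_mul]
  · intro k hk hkn
    rw [momentFunctional_X_pow_mul_detPoly, det_hankelMatrix_updateRow_shift_of_lt s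
      (lt_of_le_of_ne (Nat.lt_succ_iff.mp (Finset.mem_range.mp hk)) hkn), smul_zero]
  · simp

def normalizingFactor (s : ℕ → ℝ) (n : ℕ) : ℝ := (Real.sqrt (hankelPrev s n * hankel s n))⁻¹

def orthoPoly (s : ℕ → ℝ) (n : ℕ) : ℝ[X] := C (normalizingFactor s n) * detPoly s n

theorem Pn_eq_eval_orthoPoly (s : ℕ → ℝ) (n : ℕ) (z : ℝ) : Pn s n z = (orthoPoly s n).eval z := by
  rw [orthoPoly, eval_mul, eval_C, ← leval_apply, map_detPoly, Pn, normalizingFactor]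
  congr 2
  ext i j
  by_cases hi : i = Fin.last n
  · simp [hi]
  · simp [Matrix.updateRow_apply, hi, Fin.val_lt_last hi, hankelMatrix]

theorem natDegree_orthoPoly_le (s : ℕ → ℝ) (n : ℕ) : (orthoPoly s n).natDegree ≤ n :=
  (natDegree_C_mul_le _ _).trans (natDegree_detPoly_le s n)

theorem natDegree_X_mul_orthoPoly_le (s : ℕ → ℝ) (n : ℕ) :
    (X * orthoPoly s n).natDegree ≤ n + 1 :=
  natDegree_mul_le.trans (by linarith [natDegree_X_le (R := ℝ), natDegree_orthoPoly_le s n])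

theorem coeff_orthoPoly_self (s : ℕ → ℝ) (n : ℕ) :
    (orthoPoly s n).coeff n = normalizingFactor s n * hankelPrev s n := by
  rw [orthoPoly, coeff_C_mul, coeff_detPoly_self]

theorem eval_zero_orthoPoly (s : ℕ → ℝ) (n : ℕ) :
    (orthoPoly s n).eval 0 = normalizingFactor s n * ((-1) ^ n * hankel1 s n) := by
  rw [orthoPoly, eval_mul, eval_C, eval_zero_detPoly]

theorem momentFunctional_mul_orthoPoly (s : ℕ → ℝ) {n : ℕ} {q : ℝ[X]} (hq : q.natDegree ≤ n) :
    momentFunctional s (q * orthoPoly s n) = q.coeff n * (normalizingFactor s n * hankel s n) := by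
  rw [orthoPoly, mul_left_comm, momentFunctional_C_mul, momentFunctional_mul_detPoly s hq]
  ring

theorem momentFunctional_mul_orthoPoly_of_natDegree_lt (s : ℕ → ℝ) {n : ℕ} {q : ℝ[X]}
    (hq : q.natDegree < n) : momentFunctional s (q * orthoPoly s n) = 0 := by
  rw [momentFunctional_mul_orthoPoly s hq.le, coeff_eq_zero_of_natDegree_lt hq, zero_mul]

section PositiveHankel

variable {s : ℕ → ℝ} (h0 : ∀ n, 0 < hankel s n)
include h0

theorem hankelPrev_pos (n : ℕ) : 0 < hankelPrev s n := by
  cases n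
  exacts [one_pos, h0 _]

theorem normalizingFactor_pos (n : ℕ) : 0 < normalizingFactor s n :=
  inv_pos.mpr (Real.sqrt_pos.mpr (mul_pos (hankelPrev_pos h0 n) (h0 n)))

theorem normalizingFactor_sq_mul (n : ℕ) :
    normalizingFactor s n ^ 2 * (hankelPrev s n * hankel s n) = 1 := by
  have hpos := mul_pos (hankelPrev_pos h0 n) (h0 n)
  rw [normalizingFactor, inv_pow, Real.sq_sqrt hpos.le, inv_mul_cancel₀ hpos.ne']

theorem coeff_orthoPoly_self_pos (n : ℕ) : 0 < (orthoPoly s n).coeff n := by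
  rw [coeff_orthoPoly_self]
  exact mul_pos (normalizingFactor_pos h0 n) (hankelPrev_pos h0 n)

theorem momentFunctional_orthoPoly_mul_orthoPoly (m n : ℕ) :
    momentFunctional s (orthoPoly s m * orthoPoly s n) = if m = n then 1 else 0 := by
  rcases lt_trichotomy m n with hmn | rfl | hmn
  · rw [if_neg hmn.ne, momentFunctional_mul_orthoPoly_of_natDegree_lt s
      ((natDegree_orthoPoly_le s m).trans_lt hmn)]
  · rw [if_pos rfl, momentFunctional_mul_orthoPoly s (natDegree_orthoPoly_le s m),
      coeff_orthoPoly_self, ← normalizingFactor_sq_mul h0 m]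
    ring
  · rw [if_neg hmn.ne', mul_comm, momentFunctional_mul_orthoPoly_of_natDegree_lt s
      ((natDegree_orthoPoly_le s n).trans_lt hmn)]

theorem eq_zero_of_momentFunctional_mul_orthoPoly_eq_zero {N : ℕ} {r : ℝ[X]}
    (hr : r.natDegree ≤ N) (h : ∀ k ≤ N, momentFunctional s (r * orthoPoly s k) = 0) :
    r = 0 := by
  refine eq_zero_of_momentFunctional_X_pow_mul_eq_zero (h0 N).ne' hr fun k hk => ?_
  induction k using Nat.strong_induction_on with
  | _ k ih =>
    have hk' := h k hk
    rw [mul_comm, (momentFunctional s).map_mul_eq_sum_range_coeff (natDegree_orthoPoly_le s k),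
      Finset.sum_range_succ, Finset.sum_eq_zero fun i hi => by
        rw [ih i (Finset.mem_range.mp hi) (by linarith [Finset.mem_range.mp hi]), smul_zero],
      zero_add] at hk'
    exact (smul_eq_zero.mp hk').resolve_left (coeff_orthoPoly_self_pos h0 k).ne'

theorem eq_sum_orthoPoly {N : ℕ} {q : ℝ[X]} (hq : q.natDegree ≤ N) :
    q = ∑ k ∈ Finset.range (N + 1), C (momentFunctional s (q * orthoPoly s k)) * orthoPoly s k := by
  have hdeg : (q - ∑ k ∈ Finset.range (N + 1),
      C (momentFunctional s (q * orthoPoly s k)) * orthoPoly s k).natDegree ≤ N := by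
    refine (natDegree_sub_le_of_le hq (natDegree_sum_le_of_forall_le _ _ fun k hk => ?_)).trans
      (max_self N).le
    exact (natDegree_C_mul_le _ _).trans
      ((natDegree_orthoPoly_le s k).trans (Nat.lt_succ_iff.mp (Finset.mem_range.mp hk)))
  refine sub_eq_zero.mp (eq_zero_of_momentFunctional_mul_orthoPoly_eq_zero h0 hdeg fun k hk => ?_)
  simp [sub_mul, Finset.sum_mul, mul_assoc, momentFunctional_orthoPoly_mul_orthoPoly h0,
    Nat.lt_succ_iff.mpr hk]

theorem X_mul_orthoPoly_zero :
    X * orthoPoly s 0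
      = C (momentFunctional s (X * orthoPoly s 0 * orthoPoly s 0)) * orthoPoly s 0
        + C (momentFunctional s (X * orthoPoly s 0 * orthoPoly s 1)) * orthoPoly s 1 := by
  conv_lhs => rw [eq_sum_orthoPoly h0 (natDegree_X_mul_orthoPoly_le s 0)]
  simp [Finset.sum_range_succ]

theorem X_mul_orthoPoly_succ (m : ℕ) :
    X * orthoPoly s (m + 1)
      = C (momentFunctional s (X * orthoPoly s m * orthoPoly s (m + 1))) * orthoPoly s m
        + C (momentFunctional s (X * orthoPoly s (m + 1) * orthoPoly s (m + 1)))
          * orthoPoly s (m + 1)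
        + C (momentFunctional s (X * orthoPoly s (m + 1) * orthoPoly s (m + 2)))
          * orthoPoly s (m + 2) := by
  conv_lhs => rw [eq_sum_orthoPoly h0 (natDegree_X_mul_orthoPoly_le s (m + 1))]
  rw [Finset.sum_range_succ, Finset.sum_range_succ, Finset.sum_range_succ,
    Finset.sum_eq_zero fun k hk => ?_, zero_add, mul_right_comm X (orthoPoly s (m + 1))]
  rw [mul_right_comm, momentFunctional_mul_orthoPoly_of_natDegree_lt s
    ((natDegree_X_mul_orthoPoly_le s k).trans_lt (by simpa using hk)), C_0, zero_mul]

end PositiveHankel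

section JacobiCoefficients

variable {s : ℕ → ℝ} {ρ : Measure ℝ} (hρ : IsMomentSolution s ρ)
include hρ

theorem aJ_eq_momentFunctional (n : ℕ) :
    aJ s ρ n = momentFunctional s (X * orthoPoly s n * orthoPoly s n) := by
  simp only [← hρ.integral_eval, eval_mul, eval_X, aJ, Pn_eq_eval_orthoPoly, sq, mul_assoc]

theorem bJ_eq_momentFunctional (n : ℕ) :
    bJ s ρ n = momentFunctional s (X * orthoPoly s n * orthoPoly s (n + 1)) := by
  simp only [← hρ.integral_eval, eval_mul, eval_X, bJ, Pn_eq_eval_orthoPoly]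

theorem jacobi_recurrence_zero (h0 : ∀ n, 0 < hankel s n) (z : ℝ) :
    aJ s ρ 0 * Pn s 0 z + bJ s ρ 0 * Pn s 1 z = z * Pn s 0 z := by
  have h := congrArg (eval z) (X_mul_orthoPoly_zero h0)
  simp only [eval_mul, eval_add, eval_X, eval_C] at h
  simp only [aJ_eq_momentFunctional hρ, bJ_eq_momentFunctional hρ, Pn_eq_eval_orthoPoly, h]

theorem jacobi_recurrence_succ (h0 : ∀ n, 0 < hankel s n) (m : ℕ) (z : ℝ) :
    bJ s ρ m * Pn s m z + aJ s ρ (m + 1) * Pn s (m + 1) z + bJ s ρ (m + 1) * Pn s (m + 2) z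
      = z * Pn s (m + 1) z := by
  have h := congrArg (eval z) (X_mul_orthoPoly_succ h0 m)
  simp only [eval_mul, eval_add, eval_X, eval_C] at h
  simp only [aJ_eq_momentFunctional hρ, bJ_eq_momentFunctional hρ, Pn_eq_eval_orthoPoly, h]

theorem bJ_pos (h0 : ∀ n, 0 < hankel s n) (n : ℕ) : 0 < bJ s ρ n := by
  rw [bJ_eq_momentFunctional hρ, momentFunctional_mul_orthoPoly s (natDegree_X_mul_orthoPoly_le s n),
    coeff_X_mul]
  exact mul_pos (coeff_orthoPoly_self_pos h0 n) (mul_pos (normalizingFactor_pos h0 _) (h0 _))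

end JacobiCoefficients

theorem Pn_zero_mul_Pn_succ_zero_neg {s : ℕ → ℝ} (h0 : ∀ n, 0 < hankel s n)
    (h1 : ∀ n, 0 < hankel1 s n) (n : ℕ) : Pn s n 0 * Pn s (n + 1) 0 < 0 := by
  have hsign : (-1 : ℝ) ^ n * (-1) ^ (n + 1) = -1 := by
    rw [← pow_add]
    exact Odd.neg_one_pow ⟨n, by ring⟩
  have hpos := mul_pos (mul_pos (normalizingFactor_pos h0 n) (normalizingFactor_pos h0 (n + 1)))
    (mul_pos (h1 n) (h1 (n + 1)))
  rw [Pn_eq_eval_orthoPoly, Pn_eq_eval_orthoPoly, eval_zero_orthoPoly, eval_zero_orthoPoly]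
  linear_combination (normalizingFactor s n * normalizingFactor s (n + 1)
    * (hankel1 s n * hankel1 s (n + 1))) * hsign + hpos

theorem one_div_omKS (s : ℕ → ℝ) (ρ : Measure ℝ) (n : ℕ) :
    1 / omKS s ρ n = -(bJ s ρ n * Pn s n 0 * Pn s (n + 1) 0) := by
  rw [omKS, one_div_div]
  ring

theorem jacobi_krein_stieltjes_representation_general (s : ℕ → ℝ) (ρ : Measure ℝ)
    (hρ : IsMomentSolution s ρ)
    (h0 : ∀ n, 0 < hankel s n) (h1 : ∀ n, 0 < hankel1 s n) :
    ∀ n : ℕ, 0 < lKS s n ∧ 0 < omKS s ρ n ∧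
      aJ s ρ n = (1 / lKS s n) *
        ((match n with
          | 0 => (0 : ℝ)
          | m + 1 => 1 / omKS s ρ m) + 1 / omKS s ρ n) ∧
      bJ s ρ n = 1 / (omKS s ρ n * Real.sqrt (lKS s n * lKS s (n + 1))) := by
  intro n
  have hb := bJ_pos hρ h0 n
  have hprod := Pn_zero_mul_Pn_succ_zero_neg h0 h1 n
  have hPn : Pn s n 0 ≠ 0 := left_ne_zero_of_mul hprod.ne
  refine ⟨sq_pos_of_ne_zero hPn, ?_, ?_, ?_⟩
  · rw [omKS, mul_assoc]
    exact div_pos_of_neg_of_neg (by norm_num) (mul_neg_of_pos_of_neg hb hprod)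
  · cases n with
    | zero =>
      rw [one_div_omKS, lKS, one_div, eq_inv_mul_iff_mul_eq₀ (pow_ne_zero 2 hPn)]
      linear_combination Pn s 0 0 * jacobi_recurrence_zero hρ h0 0
    | succ m =>
      change aJ s ρ (m + 1) = 1 / lKS s (m + 1) * (1 / omKS s ρ m + 1 / omKS s ρ (m + 1))
      rw [one_div_omKS, one_div_omKS, lKS, one_div, eq_inv_mul_iff_mul_eq₀ (pow_ne_zero 2 hPn)]
      linear_combination Pn s (m + 1) 0 * jacobi_recurrence_succ hρ h0 m 0
  · have hsqrt : Real.sqrt (lKS s n * lKS s (n + 1)) = -(Pn s n 0 * Pn s (n + 1) 0) := by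
      rw [lKS, lKS, ← mul_pow, Real.sqrt_sq_eq_abs, abs_of_neg hprod]
    rw [hsqrt, omKS, neg_div, neg_mul_neg, div_mul_eq_mul_div, one_mul, mul_assoc,
      div_mul_cancel_right₀ hprod.ne, one_div, inv_inv]

/-- For a strictly double positive moment sequence the Jacobi coefficients admit the
Krein–Stieltjes representation `a_n = (1/l_n)(1/ω_{n−1} + 1/ω_n)`,
`b_n = 1/(ω_n √(l_n l_{n+1}))` (with `1/ω_{−1} := 0`); moreover `l_n > 0`, `ω_n > 0`. -/
theorem jacobi_krein_stieltjes_representation (s : ℕ → ℝ) (ρ : Measure ℝ)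
    [IsProbabilityMeasure ρ] (hρ : IsMomentSolution s ρ)
    (h0 : ∀ n, 0 < hankel s n) (h1 : ∀ n, 0 < hankel1 s n) :
    ∀ n : ℕ, 0 < lKS s n ∧ 0 < omKS s ρ n ∧
      aJ s ρ n = (1 / lKS s n) *
        ((match n with
          | 0 => (0 : ℝ)
          | m + 1 => 1 / omKS s ρ m) + 1 / omKS s ρ n) ∧
      bJ s ρ n = 1 / (omKS s ρ n * Real.sqrt (lKS s n * lKS s (n + 1))) :=
  jacobi_krein_stieltjes_representation_general s ρ hρ h0 h1
end
end

section
/- For a strictly double positive moment sequence, l_n = |P_n(0)|² = Δ_{1,n}² / (Δ_{0,n−1} Δ_{0,n}) and ω_n = Δ_{0,n}² / (Δ_{1,n} Δ_{1,n+1}) for all n ≥ 0. -/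
open MeasureTheory

noncomputable section

namespace KSaux

variable (s : ℕ → ℝ)

/-- det of the matrix whose first `n` rows are Hankel rows and last row is `r`. -/
def Ncol (n : ℕ) (r : Fin (n + 1) → ℝ) : ℝ :=
  (Matrix.of fun i j : Fin (n + 1) => if i.1 < n then s (i.1 + j.1) else r j).det

/-- cofactor of the last-row entry in column `j`. -/
def cof (n : ℕ) (j : Fin (n + 1)) : ℝ :=
  (-1 : ℝ) ^ (n + j.1) *
    (Matrix.of fun i' j' : Fin n => s (i'.1 + (j.succAbove j').1)).det

lemma Ncol_eq_sum (n : ℕ) (r : Fin (n + 1) → ℝ) :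
    Ncol s n r = ∑ j : Fin (n + 1), r j * cof s n j := by
  rw [Ncol, Matrix.det_succ_row _ (Fin.last n)]
  refine Finset.sum_congr rfl fun j _ => ?_
  have h1 : (Matrix.of fun i j : Fin (n + 1) =>
      if i.1 < n then s (i.1 + j.1) else r j) (Fin.last n) j = r j := by
    simp [Fin.last]
  have h2 : ((Matrix.of fun i j : Fin (n + 1) =>
      if i.1 < n then s (i.1 + j.1) else r j).submatrix
      (Fin.last n).succAbove j.succAbove)
      = Matrix.of fun i' j' : Fin n => s (i'.1 + (j.succAbove j').1) := by
    ext i' j'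
    simp [Matrix.submatrix_apply, Fin.succAbove_last, i'.isLt]
  rw [h1, h2, cof]
  have : ((Fin.last n : Fin (n+1)) : ℕ) = n := rfl
  rw [this]; ring

lemma cof_last (n : ℕ) : cof s n (Fin.last n) = hankelPrev s n := by
  have hsign : (-1 : ℝ) ^ (n + ((Fin.last n : Fin (n+1)) : ℕ)) = 1 := by
    have : ((Fin.last n : Fin (n+1)) : ℕ) = n := rfl
    rw [this]
    exact Even.neg_one_pow ⟨n, by ring⟩
  cases n with
  | zero =>
    simp [cof, hankelPrev, Matrix.det_fin_zero]
  | succ m =>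
    rw [cof, hsign, one_mul, hankelPrev, hankel]
    congr 1
    ext i' j'
    simp [Fin.succAbove_last]

lemma cof_zero (n : ℕ) : cof s n 0 = (-1 : ℝ) ^ n * hankel1 s n := by
  rw [cof, hankel1]
  have : (n + ((0 : Fin (n+1)) : ℕ)) = n := by simp
  rw [this]
  congr 2
  ext i' j'
  simp only [Fin.succAbove_zero, Matrix.of_apply, Fin.val_succ]
  congr 1
  omega

lemma Ncol_s_lt (n k : ℕ) (hk : k < n) : Ncol s n (fun j => s (k + j.1)) = 0 := by
  apply Matrix.det_zero_of_row_eq (i := (⟨k, by omega⟩ : Fin (n+1))) (j := Fin.last n)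
  · intro h
    have : k = n := by simpa [Fin.ext_iff, Fin.last] using h
    omega
  · funext j
    simp [Fin.last, hk]

lemma Ncol_s_eq (n : ℕ) : Ncol s n (fun j => s (n + j.1)) = hankel s n := by
  rw [Ncol, hankel]
  congr 1
  ext i j
  simp only [Matrix.of_apply]
  by_cases h : i.1 < n
  · simp [h]
  · have : i.1 = n := by omega
    simp [h, this]

lemma Ncol_zero_pow (n : ℕ) : Ncol s n (fun j => (0:ℝ) ^ j.1) = cof s n 0 := by
  rw [Ncol_eq_sum]
  rw [Finset.sum_eq_single (0 : Fin (n+1))]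
  · simp
  · intro j _ hj
    have : j.1 ≠ 0 := fun h => hj (Fin.ext h)
    simp [zero_pow this]
  · simp

variable (ρ : Measure ℝ)

lemma integrable_monsum {m : ℕ} (hρ : IsMomentSolution s ρ) (c : Fin m → ℝ) (e : Fin m → ℕ) :
    Integrable (fun x => ∑ j : Fin m, c j * x ^ e j) ρ := by
  apply integrable_finset_sum
  intro j _
  exact ((hρ (e j)).1).const_mul _

lemma integral_monsum {m : ℕ} (hρ : IsMomentSolution s ρ) (c : Fin m → ℝ) (e : Fin m → ℕ) :
    ∫ x, (∑ j : Fin m, c j * x ^ e j) ∂ρ = ∑ j : Fin m, c j * s (e j) := by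
  rw [integral_finset_sum _ (fun j _ => ((hρ (e j)).1).const_mul _)]
  exact Finset.sum_congr rfl fun j _ => by
    rw [integral_const_mul, (hρ (e j)).2]

lemma pow_mul_D_eq (n k : ℕ) (x : ℝ) :
    x ^ k * Ncol s n (fun j => x ^ j.1)
      = ∑ j : Fin (n+1), cof s n j * x ^ (k + j.1) := by
  rw [Ncol_eq_sum, Finset.mul_sum]
  exact Finset.sum_congr rfl fun j _ => by rw [pow_add]; ring

lemma integrable_pow_mul_D (hρ : IsMomentSolution s ρ) (n k : ℕ) :
    Integrable (fun x => x ^ k * Ncol s n (fun j => x ^ j.1)) ρ := by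
  simp_rw [pow_mul_D_eq]
  exact integrable_monsum s ρ hρ _ _

lemma integral_pow_mul_D (hρ : IsMomentSolution s ρ) (n k : ℕ) :
    ∫ x, x ^ k * Ncol s n (fun j => x ^ j.1) ∂ρ
      = Ncol s n (fun j => s (k + j.1)) := by
  simp_rw [pow_mul_D_eq]
  rw [integral_monsum s ρ hρ, Ncol_eq_sum]
  exact Finset.sum_congr rfl fun j _ => by ring

lemma integral_x_D_D (hρ : IsMomentSolution s ρ) (n : ℕ) :
    ∫ x, x * Ncol s n (fun j => x ^ j.1) * Ncol s (n+1) (fun j => x ^ j.1) ∂ρ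
      = hankelPrev s n * hankel s (n + 1) := by
  have hpt : ∀ x : ℝ, x * Ncol s n (fun j => x ^ j.1) * Ncol s (n+1) (fun j => x ^ j.1)
      = ∑ j : Fin (n+1), cof s n j * (x ^ (j.1 + 1) * Ncol s (n+1) (fun j' => x ^ j'.1)) := by
    intro x
    rw [Ncol_eq_sum s n, Finset.mul_sum, Finset.sum_mul]
    exact Finset.sum_congr rfl fun j _ => by rw [pow_succ]; ring
  simp_rw [hpt]
  rw [integral_finset_sum _ (fun j _ => ((integrable_pow_mul_D s ρ hρ (n+1) (j.1+1))).const_mul _)]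
  rw [Finset.sum_eq_single (Fin.last n)]
  · rw [integral_const_mul, integral_pow_mul_D s ρ hρ]
    have hl : ((Fin.last n : Fin (n+1)) : ℕ) = n := rfl
    rw [cof_last, hl, Ncol_s_eq]
  · intro j _ hj
    have hjn : j.1 < n := by
      have := j.isLt
      have : j.1 ≠ n := fun h => hj (Fin.ext (by simpa [Fin.last] using h))
      omega
    rw [integral_const_mul, integral_pow_mul_D s ρ hρ, Ncol_s_lt s (n+1) (j.1+1) (by omega), mul_zero]
  · simp

lemma Pn_eq (n : ℕ) (z : ℝ) :
    Pn s n z = (Real.sqrt (hankelPrev s n * hankel s n))⁻¹ * Ncol s n (fun j => z ^ j.1) := rfl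

end KSaux


/-- For a strictly double positive moment sequence,
`l_n = |P_n(0)|² = Δ_{1,n}²/(Δ_{0,n−1} Δ_{0,n})` and
`ω_n = Δ_{0,n}²/(Δ_{1,n} Δ_{1,n+1})` for all `n ≥ 0`. -/
theorem lKS_omKS_determinant_formulas (s : ℕ → ℝ) (ρ : Measure ℝ)
    [IsProbabilityMeasure ρ] (hρ : IsMomentSolution s ρ)
    (h0 : ∀ n, 0 < hankel s n) (h1 : ∀ n, 0 < hankel1 s n) :
    ∀ n : ℕ,
      lKS s n = hankel1 s n ^ 2 / (hankelPrev s n * hankel s n) ∧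
      omKS s ρ n = hankel s n ^ 2 / (hankel1 s n * hankel1 s (n + 1)) := by
  intro n
  have hprev : ∀ m, 0 < hankelPrev s m := fun m => by
    cases m with
    | zero => norm_num [hankelPrev]
    | succ k => exact h0 k
  have hA : 0 < hankelPrev s n := hprev n
  have hB : 0 < hankel s n := h0 n
  have hC : 0 < hankel s (n + 1) := h0 (n + 1)
  have hE : 0 < hankel1 s n := h1 n
  have hF : 0 < hankel1 s (n + 1) := h1 (n + 1)
  have hP0 : ∀ m, Pn s m 0
      = (Real.sqrt (hankelPrev s m * hankel s m))⁻¹ * ((-1 : ℝ) ^ m * hankel1 s m) := by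
    intro m
    rw [KSaux.Pn_eq, KSaux.Ncol_zero_pow, KSaux.cof_zero]
  have hb : bJ s ρ n = (Real.sqrt (hankelPrev s n * hankel s n))⁻¹ *
      (Real.sqrt (hankelPrev s (n + 1) * hankel s (n + 1)))⁻¹ *
      (hankelPrev s n * hankel s (n + 1)) := by
    rw [bJ]
    have hpt : ∀ x : ℝ, x * Pn s n x * Pn s (n + 1) x
        = ((Real.sqrt (hankelPrev s n * hankel s n))⁻¹ *
            (Real.sqrt (hankelPrev s (n + 1) * hankel s (n + 1)))⁻¹)
          * (x * KSaux.Ncol s n (fun j => x ^ j.1)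
              * KSaux.Ncol s (n + 1) (fun j => x ^ j.1)) := by
      intro x
      rw [KSaux.Pn_eq, KSaux.Pn_eq]
      ring
    simp_rw [hpt]
    rw [integral_const_mul, KSaux.integral_x_D_D s ρ hρ n]
  constructor
  · have hsq : ((-1 : ℝ) ^ n) ^ 2 = 1 := by
      rw [← pow_mul, mul_comm, pow_mul]
      norm_num
    rw [lKS, hP0 n, mul_pow, mul_pow, hsq, one_mul, inv_pow,
      Real.sq_sqrt (by positivity : (0:ℝ) ≤ hankelPrev s n * hankel s n), inv_mul_eq_div]
  · have hP1 : hankelPrev s (n + 1) = hankel s n := rfl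
    rw [omKS, hb, hP0 n, hP0 (n + 1), hP1]
    set u := Real.sqrt (hankelPrev s n * hankel s n) with hu
    set v := Real.sqrt (hankel s n * hankel s (n + 1)) with hv
    have hu2 : u * u = hankelPrev s n * hankel s n :=
      Real.mul_self_sqrt (by positivity)
    have hv2 : v * v = hankel s n * hankel s (n + 1) :=
      Real.mul_self_sqrt (by positivity)
    have hm : (-1 : ℝ) ^ n * (-1 : ℝ) ^ (n + 1) = -1 := by
      rw [← pow_add]
      exact Odd.neg_one_pow ⟨n, by ring⟩
    have e1 : u⁻¹ * u⁻¹ = (hankelPrev s n * hankel s n)⁻¹ := by rw [← mul_inv, hu2]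
    have e2 : v⁻¹ * v⁻¹ = (hankel s n * hankel s (n + 1))⁻¹ := by rw [← mul_inv, hv2]
    have hD : u⁻¹ * v⁻¹ * (hankelPrev s n * hankel s (n + 1)) *
        (u⁻¹ * ((-1 : ℝ) ^ n * hankel1 s n)) *
        (v⁻¹ * ((-1 : ℝ) ^ (n + 1) * hankel1 s (n + 1)))
        = -(hankel1 s n * hankel1 s (n + 1)) / (hankel s n) ^ 2 := by
      calc u⁻¹ * v⁻¹ * (hankelPrev s n * hankel s (n + 1)) *
            (u⁻¹ * ((-1 : ℝ) ^ n * hankel1 s n)) *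
            (v⁻¹ * ((-1 : ℝ) ^ (n + 1) * hankel1 s (n + 1)))
          = (u⁻¹ * u⁻¹) * (v⁻¹ * v⁻¹) * (((-1 : ℝ) ^ n * (-1 : ℝ) ^ (n + 1)) *
              (hankelPrev s n * hankel s (n + 1) * hankel1 s n * hankel1 s (n + 1))) := by
            ring
        _ = (hankelPrev s n * hankel s n)⁻¹ * (hankel s n * hankel s (n + 1))⁻¹ *
              (-1 * (hankelPrev s n * hankel s (n + 1) * hankel1 s n * hankel1 s (n + 1))) := by
            rw [e1, e2, hm]
        _ = -(hankel1 s n * hankel1 s (n + 1)) / (hankel s n) ^ 2 := by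
            field_simp
    rw [hD]
    rw [div_div_eq_mul_div, neg_one_mul, neg_div, div_neg, neg_neg]
end
end

section
/- For a strictly positive moment sequence, the determinant inequality Δ_{1,n} Δ_{−1,n+1} − Δ_{1,n+1} Δ_{−1,n} ≠ 0 holds for all n ≥ 0; more precisely Δ_{1,n+1} Δ_{−1,n} − Δ_{1,n} Δ_{−1,n+1} = Δ_{0,n}². -/
/-!
`Δ_{−1,n+1}` is the determinant of the `(n+2) × (n+2)` Hankel matrix `M` of the sequence
`0, s₀, s₁, …`. Deleting the first and last rows and columns of `M` leaves the Hankel matrix of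
`Δ_{1,n}`; deleting its first row and column gives `Δ_{1,n+1}`, its last row and column `Δ_{−1,n}`,
and the first row and last column (or vice versa) `Δ_{0,n}`. So the identity is the
Desnanot–Jacobi identity for `M`.

Desnanot–Jacobi is Jacobi's complementary minor theorem for the `2 × 2` border block: with
`P = [[adj(M)₁₁, 0], [adj(M)₂₁, 1]]` one has `M P = [[det M • 1, M₁₂], [0, M₂₂]]`, hence
`det M · det adj(M)₁₁ = (det M)² · det M₂₂`, and `det M` cancels for the generic matrix over
`ℤ[Xᵢⱼ]`.
-/

noncomputable section

/-- `Δ_{−1,n}`: the `(n+1)×(n+1)` determinant with first row `(0, s_0, …, s_{n−1})`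
and subsequent rows `(s_{i−1}, s_i, …, s_{i+n−1})` (so `Δ_{−1,0} = 0`). -/
def hankelm1 (s : ℕ → ℝ) (n : ℕ) : ℝ :=
  (Matrix.of fun i j : Fin (n + 1) =>
    if i.1 + j.1 = 0 then (0 : ℝ) else s (i.1 + j.1 - 1)).det

namespace Matrix

section JacobiComplementaryMinor

variable {m n R : Type*} [Fintype m] [Fintype n] [DecidableEq m] [DecidableEq n] [CommRing R]

theorem det_mul_det_adjugate_toBlocks₁₁ (M : Matrix (m ⊕ n) (m ⊕ n) R) :
    M.det * M.adjugate.toBlocks₁₁.det = M.det ^ Fintype.card m * M.toBlocks₂₂.det := by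
  set A := M.adjugate with hA
  set d := M.det with hd
  have hMA : M * fromBlocks A.toBlocks₁₁ 0 A.toBlocks₂₁ 1 =
      fromBlocks (d • 1) M.toBlocks₁₂ 0 M.toBlocks₂₂ := by
    have h := M.mul_adjugate
    rw [← hA, ← hd, ← fromBlocks_toBlocks M, ← fromBlocks_toBlocks A, fromBlocks_multiply,
      ← fromBlocks_one, fromBlocks_smul, smul_zero] at h
    obtain ⟨h₁₁, -, h₂₁, -⟩ := fromBlocks_inj.1 h
    rw [← fromBlocks_toBlocks M, fromBlocks_multiply, h₁₁, h₂₁]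
    simp
  simpa [det_fromBlocks_zero₁₂, det_fromBlocks_zero₂₁, det_smul] using congrArg det hMA

theorem det_adjugate_toBlocks₁₁ [Nonempty m] (M : Matrix (m ⊕ n) (m ⊕ n) R) :
    M.adjugate.toBlocks₁₁.det = M.det ^ (Fintype.card m - 1) * M.toBlocks₂₂.det := by
  set X := mvPolynomialX (m ⊕ n) (m ⊕ n) ℤ
  have hX : X.adjugate.toBlocks₁₁.det = X.det ^ (Fintype.card m - 1) * X.toBlocks₂₂.det := by
    apply mul_left_cancel₀ (det_mvPolynomialX_ne_zero _ ℤ)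
    rw [det_mul_det_adjugate_toBlocks₁₁, ← mul_assoc, ← pow_succ',
      Nat.sub_add_cancel Fintype.card_pos]
  let f : MvPolynomial ((m ⊕ n) × (m ⊕ n)) ℤ →+* R :=
    MvPolynomial.eval₂Hom (Int.castRingHom R) fun p => M p.1 p.2
  have hfX : f.mapMatrix X = M := mvPolynomialX_map_eval₂ _ M
  rw [← hfX, ← RingHom.map_adjugate]
  have hXf := congrArg f hX
  simp only [map_mul, map_pow, RingHom.map_det] at hXf
  exact hXf

end JacobiComplementaryMinor

def finBorderSumEquiv (n : ℕ) : Fin 2 ⊕ Fin n ≃ Fin (n + 2) :=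
  Equiv.ofBijective (Sum.elim ![0, Fin.last (n + 1)] fun k => k.castSucc.succ) <| by
    constructor
    · rintro (a | a) (b | b) h
      · fin_cases a <;> fin_cases b <;> simp_all [Fin.ext_iff]
      · fin_cases a <;> simp [Fin.ext_iff, b.isLt.ne'] at h
      · fin_cases b <;> simp [Fin.ext_iff, a.isLt.ne] at h
      · simpa [Fin.ext_iff] using h
    · intro i
      induction i using Fin.cases with
      | zero => exact ⟨.inl 0, rfl⟩
      | succ i =>
        induction i using Fin.lastCases with
        | last => exact ⟨.inl 1, rfl⟩
        | cast k => exact ⟨.inr k, rfl⟩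

variable {R : Type*} [CommRing R]

theorem desnanot_jacobi {n : ℕ} (M : Matrix (Fin (n + 2)) (Fin (n + 2)) R) :
    M.det * (M.submatrix (fun k : Fin n => k.castSucc.succ) fun k => k.castSucc.succ).det =
      (M.submatrix Fin.succ Fin.succ).det * (M.submatrix Fin.castSucc Fin.castSucc).det -
        (M.submatrix Fin.castSucc Fin.succ).det * (M.submatrix Fin.succ Fin.castSucc).det := by
  have hJ := det_adjugate_toBlocks₁₁ (M.submatrix (finBorderSumEquiv n) (finBorderSumEquiv n))
  rw [adjugate_submatrix_equiv_self, det_submatrix_equiv_self, det_fin_two] at hJ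
  change M.adjugate 0 0 * M.adjugate (Fin.last _) (Fin.last _) -
      M.adjugate 0 (Fin.last _) * M.adjugate (Fin.last _) 0 =
    M.det ^ 1 * (M.submatrix (fun k : Fin n => k.castSucc.succ) fun k => k.castSucc.succ).det at hJ
  simp only [adjugate_fin_succ_eq_det_submatrix, Fin.succAbove_zero, Fin.succAbove_last,
    Fin.val_zero, Fin.val_last, add_zero, zero_add, Even.neg_one_pow ⟨n + 1, rfl⟩, pow_zero,
    pow_one, one_mul] at hJ
  have hsign : (-1 : R) ^ (n + 1) * (-1) ^ (n + 1) = 1 := by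
    rw [← pow_add, Even.neg_one_pow ⟨n + 1, rfl⟩]
  linear_combination -hJ -
    (M.submatrix Fin.castSucc Fin.succ).det * (M.submatrix Fin.succ Fin.castSucc).det * hsign

def hankel {α : Type*} (t : ℕ → α) (n : ℕ) : Matrix (Fin n) (Fin n) α :=
  of fun i j => t (i + j)

theorem submatrix_hankel {α : Type*} (t : ℕ → α) {m n : ℕ} (f g : Fin m → Fin n) (a b : ℕ)
    (hf : ∀ i, (f i : ℕ) = i + a) (hg : ∀ j, (g j : ℕ) = j + b) :
    (hankel t n).submatrix f g = hankel (fun k => t (k + (a + b))) m := by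
  ext i j
  simp only [hankel, submatrix_apply, of_apply, hf, hg]
  congr 1
  ring

theorem det_hankel_mul_det_hankel (t : ℕ → R) (n : ℕ) :
    (hankel t (n + 2)).det * (hankel (fun k => t (k + 2)) n).det =
      (hankel (fun k => t (k + 2)) (n + 1)).det * (hankel t (n + 1)).det -
        (hankel (fun k => t (k + 1)) (n + 1)).det ^ 2 := by
  have h := desnanot_jacobi (hankel t (n + 2))
  rwa [submatrix_hankel t _ _ 1 1 (fun _ => rfl) (fun _ => rfl),
    submatrix_hankel t Fin.succ Fin.succ 1 1 (fun _ => rfl) (fun _ => rfl),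
    submatrix_hankel t Fin.castSucc Fin.castSucc 0 0 (fun _ => rfl) (fun _ => rfl),
    submatrix_hankel t Fin.castSucc Fin.succ 0 1 (fun _ => rfl) (fun _ => rfl),
    submatrix_hankel t Fin.succ Fin.castSucc 1 0 (fun _ => rfl) (fun _ => rfl), ← sq] at h

end Matrix

theorem hankel_eq_det (s : ℕ → ℝ) (n : ℕ) : hankel s n = (Matrix.hankel s (n + 1)).det := rfl

theorem hankel1_eq_det (s : ℕ → ℝ) (n : ℕ) :
    hankel1 s n = (Matrix.hankel (fun k => s (k + 1)) n).det := by
  simp only [hankel1, Matrix.hankel, add_comm 1, add_right_comm]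

theorem hankelm1_eq_det (s : ℕ → ℝ) (n : ℕ) :
    hankelm1 s n = (Matrix.hankel (fun k => if k = 0 then 0 else s (k - 1)) (n + 1)).det := rfl

theorem hankelm1_succ_mul_hankel1 (s : ℕ → ℝ) (n : ℕ) :
    hankelm1 s (n + 1) * hankel1 s n = hankel1 s (n + 1) * hankelm1 s n - hankel s n ^ 2 := by
  have h := Matrix.det_hankel_mul_det_hankel (fun k => if k = 0 then 0 else s (k - 1)) n
  simp only [add_eq_zero, one_ne_zero, OfNat.ofNat_ne_zero, and_false, if_false,
    Nat.add_sub_cancel] at h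
  rwa [hankelm1_eq_det, hankelm1_eq_det, hankel1_eq_det, hankel1_eq_det, hankel_eq_det]

/-- For a strictly positive moment sequence,
`Δ_{1,n+1} Δ_{−1,n} − Δ_{1,n} Δ_{−1,n+1} = Δ_{0,n}²`; in particular
`Δ_{1,n} Δ_{−1,n+1} − Δ_{1,n+1} Δ_{−1,n} ≠ 0` for all `n ≥ 0`. -/
theorem hankel_determinant_identity (s : ℕ → ℝ) (h0 : ∀ n, 0 < hankel s n) :
    ∀ n : ℕ,
      hankel1 s (n + 1) * hankelm1 s n - hankel1 s n * hankelm1 s (n + 1)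
        = (hankel s n) ^ 2 ∧
      hankel1 s n * hankelm1 s (n + 1) - hankel1 s (n + 1) * hankelm1 s n ≠ 0 := by
  intro n
  have key := hankelm1_succ_mul_hankel1 s n
  refine ⟨by linear_combination -key, ?_⟩
  rw [show _ - _ = -hankel s n ^ 2 by linear_combination key]
  exact neg_ne_zero.2 (pow_pos (h0 n) 2).ne'
end
end

section
/- If m = q/p is a rational Herglotz–Nevanlinna function with q, p coprime real polynomials and deg p = deg q + 1, then m_0 := −p/q is also a Herglotz–Nevanlinna function, and there exists l_0 > 0 and a rational Herglotz–Nevanlinna function m̃_0 bounded near ∞ such that m_0(z) = l_0 z + m̃_0(z). -/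
/-!
At a non-real zero `z₀` of `q`, `m = q/p` vanishes while `im m ≥ 0` nearby, so by the open mapping
theorem `m` vanishes near `z₀`, forcing `q = 0`. Hence `q` has only real zeros, and `-p/q = -1/m`
is Herglotz–Nevanlinna. Removing the leading term, `-p/q = l₀ z + m̃₀` with
`l₀ = -lc p / lc q` and `m̃₀ = -r/q`, `deg r ≤ deg q`, so `m̃₀` has a real limit at `∞`.
Along `z = iy`, `y → ∞`, the inequality `im (-p/q) ≥ 0` gives `l₀ ≥ 0`. Then
`im m̃₀ ≥ -l₀ im z` tends to `0` at the real axis and at `∞`, and the maximum principle on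
truncated half-planes gives `im m̃₀ ≥ 0`.
-/

open Polynomial

noncomputable section

/-- A Herglotz–Nevanlinna function: analytic off the real line, maps the open upper
half-plane into the closed upper half-plane, symmetry `f(z*) = f(z)*`. -/
def IsHerglotz (f : ℂ → ℂ) : Prop :=
  (∀ z : ℂ, z.im ≠ 0 → DifferentiableAt ℂ f z) ∧
  (∀ z : ℂ, 0 < z.im → 0 ≤ (f z).im) ∧
  (∀ z : ℂ, z.im ≠ 0 → f ((starRingEnd ℂ) z) = (starRingEnd ℂ) (f z))

open Filter Topology Bornology Complex

theorem AnalyticAt.eventually_eq_of_isLocalMin_im {f : ℂ → ℂ} {z₀ : ℂ} (hf : AnalyticAt ℂ f z₀)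
    (hmin : IsLocalMin (fun z => (f z).im) z₀) : ∀ᶠ z in 𝓝 z₀, f z = f z₀ := by
  refine hf.eventually_constant_or_nhds_le_map_nhds.resolve_right fun hopen => ?_
  have hint : f z₀ ∈ interior {w : ℂ | (f z₀).im ≤ w.im} :=
    mem_interior_iff_mem_nhds.2 (hopen hmin)
  rw [interior_setOfPred_le_im] at hint
  exact lt_irrefl (f z₀).im hint

theorem IsHerglotz.aeval_ne_zero {m : ℂ → ℂ} (hm : IsHerglotz m) {p q : ℝ[X]}
    (hcop : IsCoprime p q) (hq : q ≠ 0) (hmpq : ∀ z : ℂ, z.im ≠ 0 → m z = aeval z q / aeval z p)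
    {z : ℂ} (hz : z.im ≠ 0) : aeval z q ≠ 0 := by
  wlog hz' : 0 < z.im generalizing z
  · intro hqz
    refine this (z := (starRingEnd ℂ) z) (by simpa using hz)
      (by simpa using lt_of_le_of_ne (not_lt.1 hz') hz) ?_
    rw [aeval_conj, hqz, map_zero]
  intro hqz
  have hpz : aeval z p ≠ 0 := by
    have := hcop.map (aeval z : ℝ[X] →ₐ[ℝ] ℂ).toRingHom
    simp only [AlgHom.toRingHom_eq_coe, RingHom.coe_coe, hqz, isCoprime_zero_right] at this
    exact this.ne_zero
  have hoff : {w : ℂ | w.im ≠ 0} ∈ 𝓝 z :=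
    (isOpen_ne.preimage continuous_im).mem_nhds hz
  have hA : AnalyticAt ℂ m z :=
    DifferentiableOn.analyticAt (fun w hw => (hm.1 w hw).differentiableWithinAt) hoff
  have hmz : m z = 0 := by rw [hmpq z hz, hqz, zero_div]
  have hmin : IsLocalMin (fun w => (m w).im) z := by
    filter_upwards [(isOpen_lt continuous_const continuous_im).mem_nhds hz'] with w hw
    simpa [hmz] using hm.2.1 w hw
  have hroots : {w | (q.map (algebraMap ℝ ℂ)).IsRoot w} ∈ 𝓝 z := by
    filter_upwards [hA.eventually_eq_of_isLocalMin_im hmin, hoff,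
      (Polynomial.continuous_aeval p).continuousAt.eventually_ne hpz] with w hmw hw hpw
    rw [hmz, hmpq w hw, div_eq_zero_iff] at hmw
    simpa [IsRoot, eval_map_algebraMap] using hmw.resolve_right hpw
  exact hq ((Polynomial.map_eq_zero _).1
    (eq_zero_of_infinite_isRoot _ (infinite_of_mem_nhds z hroots)))

theorem isHerglotz_aeval_div {a b : ℝ[X]} (hb : ∀ z : ℂ, z.im ≠ 0 → aeval z b ≠ 0)
    (him : ∀ z : ℂ, 0 < z.im → 0 ≤ (aeval z a / aeval z b).im) :
    IsHerglotz fun z => aeval z a / aeval z b :=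
  ⟨fun z hz => (Polynomial.differentiable_aeval a z).div (Polynomial.differentiable_aeval b z)
    (hb z hz), him, fun z _ => by simp only [aeval_conj, map_div₀]⟩

theorem ne_zero_of_degree_eq_degree_add_one {R : Type*} [Semiring R] {p q : R[X]} (hq : q ≠ 0)
    (hdeg : p.degree = q.degree + 1) : p ≠ 0 := by
  rintro rfl
  rw [degree_zero, degree_eq_natDegree hq] at hdeg
  exact WithBot.bot_ne_coe (a := q.natDegree + 1) (by exact_mod_cast hdeg)

theorem natDegree_sub_C_mul_X_mul_le {K : Type*} [Field K] {p q : K[X]} (hq : q ≠ 0)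
    (hdeg : p.degree = q.degree + 1) :
    (p - C (p.leadingCoeff / q.leadingCoeff) * X * q).natDegree ≤ q.natDegree := by
  have hp := ne_zero_of_degree_eq_degree_add_one hq hdeg
  have hpq : p.natDegree = q.natDegree + 1 :=
    natDegree_eq_of_degree_eq_some (by rw [hdeg, degree_eq_natDegree hq]; norm_cast)
  set s := C (p.leadingCoeff / q.leadingCoeff) * X * q
  have hc : p.leadingCoeff / q.leadingCoeff ≠ 0 := by simp [hp, hq]
  have hs : p.degree = s.degree := by
    rw [degree_mul, degree_C_mul_X hc, hdeg, add_comm]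
  have hlead : p.leadingCoeff = s.leadingCoeff := by
    simp [s, leadingCoeff_mul, hq]
  rcases eq_or_ne (p - s) 0 with h | h
  · simp [h]
  · have := natDegree_lt_natDegree h (degree_sub_lt_left hs hp hlead)
    omega

theorem tendsto_eval₂_div_pow_cobounded {R 𝕜 : Type*} [Semiring R] [NormedField 𝕜]
    (i : R →+* 𝕜) {f : R[X]} {N : ℕ} (hf : f.natDegree ≤ N) :
    Tendsto (fun x => f.eval₂ i x / x ^ N) (cobounded 𝕜) (𝓝 (i (f.coeff N))) := by
  have hlim : Tendsto (fun x : 𝕜 => (reflect N f).eval₂ i x⁻¹) (cobounded 𝕜)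
      (𝓝 (i (f.coeff N))) := by
    have := ((reflect N f).continuous_eval₂ i).continuousAt.tendsto.comp tendsto_inv₀_cobounded
    simpa [Function.comp_def, eval₂_at_zero, coeff_reflect] using this
  refine hlim.congr' ?_
  filter_upwards [eventually_ne_cobounded 0] with x hx
  let := invertibleOfNonzero hx
  rw [eq_div_iff (pow_ne_zero N hx), ← eval₂_reflect_mul_pow i x N f hf, invOf_eq_inv]

theorem tendsto_eval₂_div_eval₂_cobounded {R 𝕜 : Type*} [Semiring R] [NormedField 𝕜]
    (i : R →+* 𝕜) {a b : R[X]} (hab : a.natDegree ≤ b.natDegree)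
    (hb : i b.leadingCoeff ≠ 0) :
    Tendsto (fun x => a.eval₂ i x / b.eval₂ i x) (cobounded 𝕜)
      (𝓝 (i (a.coeff b.natDegree) / i b.leadingCoeff)) := by
  refine ((tendsto_eval₂_div_pow_cobounded i hab).div
    (tendsto_eval₂_div_pow_cobounded i le_rfl) hb).congr' ?_
  filter_upwards [eventually_ne_cobounded 0] with x hx
  exact div_div_div_cancel_right₀ (pow_ne_zero _ hx) _ _

theorem nonneg_of_im_nonneg_of_eq_mul_add {f g : ℂ → ℂ} {l : ℝ} {L : ℂ}
    (hf : ∀ z : ℂ, 0 < z.im → 0 ≤ (f z).im) (hfg : ∀ z : ℂ, 0 < z.im → f z = l * z + g z)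
    (hg : Tendsto g (cobounded ℂ) (𝓝 L)) : 0 ≤ l := by
  have hI : Tendsto (fun y : ℝ => (y : ℂ) * I) atTop (cobounded ℂ) := by
    rw [← tendsto_norm_atTop_iff_cobounded]
    refine tendsto_atTop_mono' _ ?_ tendsto_id
    filter_upwards [eventually_ge_atTop 0] with y hy
    simp [abs_of_nonneg hy]
  have hlim : Tendsto (fun y : ℝ => l + (g (y * I)).im / y) atTop (𝓝 (l + 0)) :=
    tendsto_const_nhds.add
      (((continuous_im.tendsto L).comp (hg.comp hI)).div_atTop tendsto_id)
  refine ge_of_tendsto (by simpa using hlim) ?_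
  filter_upwards [eventually_gt_atTop 0] with y hy
  have him : (f (y * I)).im = l * y + (g (y * I)).im := by simp [hfg (y * I) (by simpa using hy)]
  have hexp : l + (g (y * I)).im / y = (f (y * I)).im / y := by rw [him]; field_simp
  rw [hexp]
  exact div_nonneg (hf (y * I) (by simpa using hy)) hy.le

theorem im_nonneg_of_boundary {f : ℂ → ℂ} (hf : DifferentiableOn ℂ f {z | 0 < z.im})
    (haxis : ∀ ε > 0, ∃ δ > 0, ∀ z : ℂ, 0 < z.im → z.im ≤ δ → -ε ≤ (f z).im)
    (hinf : ∀ ε > 0, ∀ᶠ z in cobounded ℂ, 0 < z.im → -ε ≤ (f z).im)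
    {z : ℂ} (hz : 0 < z.im) : 0 ≤ (f z).im := by
  refine le_of_forall_pos_le_add fun ε hε => ?_
  suffices -ε ≤ (f z).im by linarith
  obtain ⟨δ, hδ, hδf⟩ := haxis ε hε
  obtain ⟨R, -, hR⟩ := hasBasis_cobounded_norm.eventually_iff.1 (hinf ε hε)
  have hbdry : ∀ w : ℂ, 0 < w.im → w.im ≤ δ ∨ R ≤ ‖w‖ → -ε ≤ (f w).im := fun w hw h =>
    h.elim (hδf w hw) fun hRw => hR hRw hw
  by_cases hzU : δ < z.im ∧ ‖z‖ < R
  swap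
  · exact hbdry z hz (by by_contra! h; exact hzU h)
  -- `exp (I * f)` has modulus `exp (-im f)`, so the maximum modulus principle bounds `-im f`.
  set U := {w : ℂ | δ < w.im} ∩ Metric.ball 0 R
  have hUopen : IsOpen U := (isOpen_lt continuous_const continuous_im).inter Metric.isOpen_ball
  have hclosure : ∀ w ∈ closure U, δ ≤ w.im ∧ ‖w‖ ≤ R := fun w hw => by
    have := closure_inter_subset_inter_closure _ _ hw
    rw [closure_setOfPred_lt_im] at this
    exact ⟨this.1, mem_closedBall_zero_iff.1 (Metric.closure_ball_subset_closedBall this.2)⟩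
  have hdiff : DiffContOnCl ℂ (fun w => exp (I * f w)) U := by
    refine DifferentiableOn.diffContOnCl ((hf.mono fun w hw => ?_).const_mul I).cexp
    exact lt_of_lt_of_le hδ (hclosure w hw).1
  have hfrontier : ∀ w ∈ frontier U, ‖exp (I * f w)‖ ≤ Real.exp ε := by
    intro w hw
    rw [hUopen.frontier_eq] at hw
    obtain ⟨hδw, hRw⟩ := hclosure w hw.1
    have := hbdry w (lt_of_lt_of_le hδ hδw) (by
      by_contra! h
      exact hw.2 ⟨h.1, mem_ball_zero_iff.2 h.2⟩)
    simpa [norm_exp] using neg_le.1 this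
  have := norm_le_of_forall_mem_frontier_norm_le
    (Metric.isBounded_ball.subset Set.inter_subset_right) hdiff hfrontier
    (subset_closure ⟨hzU.1, mem_ball_zero_iff.2 hzU.2⟩)
  exact neg_le.1 (by simpa [norm_exp] using this)

theorem im_nonneg_of_eq_mul_add {f g : ℂ → ℂ} {l L : ℝ} (hl : 0 ≤ l)
    (hf : ∀ z : ℂ, 0 < z.im → 0 ≤ (f z).im) (hfg : ∀ z : ℂ, 0 < z.im → f z = l * z + g z)
    (hg : DifferentiableOn ℂ g {z | 0 < z.im}) (hlim : Tendsto g (cobounded ℂ) (𝓝 (L : ℂ)))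
    {z : ℂ} (hz : 0 < z.im) : 0 ≤ (g z).im := by
  refine im_nonneg_of_boundary hg (fun ε hε => ⟨ε / (l + 1), by positivity, fun w hw hwδ => ?_⟩)
    (fun ε hε => ?_) hz
  · have hfw := hf w hw
    simp only [hfg w hw, add_im, mul_im, ofReal_re, ofReal_im, zero_mul, add_zero] at hfw
    have : l * w.im ≤ ε := calc
      l * w.im ≤ l * (ε / (l + 1)) := mul_le_mul_of_nonneg_left hwδ hl
      _ ≤ ε := by rw [mul_div_assoc', div_le_iff₀ (by positivity)]; nlinarith
    linarith
  · have him : Tendsto (fun w => (g w).im) (cobounded ℂ) (𝓝 0) := by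
      simpa [Function.comp_def] using (continuous_im.tendsto _).comp hlim
    filter_upwards [him.eventually_const_le (neg_lt_zero.2 hε)] with w hw _
    exact hw

/-- If `m = q/p` is a rational Herglotz–Nevanlinna function with `q, p` coprime real
polynomials and `deg p = deg q + 1`, then `m_0 := −p/q` is again a Herglotz–Nevanlinna
function and there exist `l_0 > 0` and a rational Herglotz–Nevanlinna function `m̃_0`
bounded near `∞` such that `m_0(z) = l_0 z + m̃_0(z)`. -/
theorem euclid_step_herglotz (m : ℂ → ℂ) (hHN : IsHerglotz m)
    (p q : ℝ[X]) (hcop : IsCoprime p q) (hdeg : p.degree = q.degree + 1)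
    (hm : ∀ z : ℂ, z.im ≠ 0 → m z = aeval z q / aeval z p) :
    IsHerglotz (fun z => -(aeval z p) / aeval z q) ∧
    ∃ l₀ : ℝ, 0 < l₀ ∧ ∃ mt : ℂ → ℂ, IsHerglotz mt ∧
      (∃ p' q' : ℝ[X], ∀ z : ℂ, z.im ≠ 0 → mt z = aeval z q' / aeval z p') ∧
      (∃ C R : ℝ, ∀ z : ℂ, z.im ≠ 0 → R < ‖z‖ → ‖mt z‖ ≤ C) ∧
      ∀ z : ℂ, z.im ≠ 0 → -(aeval z p) / aeval z q = (l₀ : ℂ) * z + mt z := by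
  have hq : q ≠ 0 := by
    rintro rfl
    rw [degree_zero, WithBot.bot_add, degree_eq_bot] at hdeg
    exact not_isCoprime_zero_zero (hdeg ▸ hcop)
  have hqz : ∀ z : ℂ, z.im ≠ 0 → aeval z q ≠ 0 := fun z => hHN.aeval_ne_zero hcop hq hm
  set c := p.leadingCoeff / q.leadingCoeff
  set r := p - C c * X * q
  have hc : c ≠ 0 := by simp [c, ne_zero_of_degree_eq_degree_add_one hq hdeg, hq]
  have hdecomp : ∀ z : ℂ, z.im ≠ 0 →
      -(aeval z p) / aeval z q = ((-c : ℝ) : ℂ) * z + aeval z (-r) / aeval z q := by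
    intro z hz
    simp only [r, map_neg, aeval_sub, map_mul, aeval_C, aeval_X, coe_algebraMap]
    field_simp [hqz z hz]
    push_cast
    ring
  have hf : IsHerglotz fun z => -(aeval z p) / aeval z q := by
    have := isHerglotz_aeval_div (a := -p) hqz fun z hz => by
      rw [map_neg, neg_div, ← inv_div, ← hm z hz.ne', neg_im, inv_im, neg_div, neg_neg]
      exact div_nonneg (hHN.2.1 z hz) (normSq_nonneg _)
    simpa using this
  have hlim : Tendsto (fun z => aeval z (-r) / aeval z q) (cobounded ℂ)
      (𝓝 (((-r).coeff q.natDegree / q.leadingCoeff : ℝ) : ℂ)) := by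
    have := tendsto_eval₂_div_eval₂_cobounded (algebraMap ℝ ℂ) (a := -r) (b := q)
      (by simpa using natDegree_sub_C_mul_X_mul_le hq hdeg) (by simpa using hq)
    rw [ofReal_div]
    exact this
  have hl : 0 ≤ -c := nonneg_of_im_nonneg_of_eq_mul_add hf.2.1 (fun z hz => hdecomp z hz.ne') hlim
  have hdiff : DifferentiableOn ℂ (fun z => aeval z (-r) / aeval z q) {z : ℂ | 0 < z.im} :=
    fun z hz => ((Polynomial.differentiable_aeval _ z).div (Polynomial.differentiable_aeval _ z)
      (hqz z hz.ne')).differentiableWithinAt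
  refine ⟨hf, -c, hl.lt_of_ne' (neg_ne_zero.2 hc), _,
    isHerglotz_aeval_div hqz fun z hz =>
      im_nonneg_of_eq_mul_add hl hf.2.1 (fun z hz => hdecomp z hz.ne') hdiff hlim hz,
    ⟨q, -r, fun _ _ => rfl⟩, ?_, hdecomp⟩
  obtain ⟨R, -, hR⟩ := hasBasis_cobounded_norm.eventually_iff.1
    (hlim.norm.eventually (eventually_le_nhds (lt_add_one _)))
  exact ⟨_, R, fun z _ hz => hR hz.le⟩

end
end
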